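/- Let H be a topological group acting continuously on the right on a topological space B, freely and transitively on each fiber of a continuous surjection π : B → M, let σ : U → B be a continuous section over U ⊆ M with orientation function h_σ (defined by σ(π(b))·h_σ(b) = b), let U_S and U_R be strongly continuous unitary representations of H on H_S and H_R, and let E be an H-covariant POVM on π⁻¹(U) with values in B(H_R) (E(Y·g) = U_R(g)* E(Y) U_R(g)). Then for every field φ̂ : M → B(H_S) such that b ↦ φ̂(π(b)).h_σ(b) is ultraweakly continuous and bounded, the relativized field operator ¥(φ̂) := ∫_{π⁻¹(U)} φ̂(π(b)).h_σ(b) ⊗ dE(b) is H-invariant: (U_S(g) ⊗ U_R(g))* ¥(φ̂) (U_S(g) ⊗ U_R(g)) = ¥(φ̂) for all g ∈ H. -/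

import Mathlib

open MeasureTheory ContinuousLinearMap
open scoped ENNReal

noncomputable section

namespace QRF

variable (H : Type*) [NormedAddCommGroup H] [InnerProductSpace ℂ H] [CompleteSpace H]

/-- The index set of an arbitrarily chosen Hilbert basis of `H`. -/
def hbIdx : Set H := (exists_hilbertBasis ℂ H).choose

/-- An arbitrarily chosen Hilbert basis of `H`. -/
def hb : HilbertBasis (hbIdx H) ℂ H := (exists_hilbertBasis ℂ H).choose_spec.choose

variable {H}

/-- The trace of an operator, computed along the chosen Hilbert basis.  (It is
basis-independent, and finite, on trace-class operators.) -/
def trace (T : H →L[ℂ] H) : ℂ := ∑' i : hbIdx H, (inner ℂ (hb H i) (T (hb H i)) : ℂ)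

/-- A positive trace-class operator: positive with summable diagonal (for positive
operators this is basis-independent). -/
def IsPositiveTraceClass (T : H →L[ℂ] H) : Prop :=
  T.IsPositive ∧ Summable fun i : hbIdx H => ((inner ℂ (hb H i) (T (hb H i)) : ℂ)).re

/-- A state: a positive trace-class operator of trace one. -/
def IsState (T : H →L[ℂ] H) : Prop := IsPositiveTraceClass T ∧ trace T = 1

/-- A trace-class operator: a linear combination of four positive trace-class operators. -/
def IsTraceClass (T : H →L[ℂ] H) : Prop :=
  ∃ A B C D : H →L[ℂ] H, IsPositiveTraceClass A ∧ IsPositiveTraceClass B ∧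
    IsPositiveTraceClass C ∧ IsPositiveTraceClass D ∧ T = A - B + Complex.I • (C - D)

variable {Ω Ω' : Type*} [MeasurableSpace Ω] [MeasurableSpace Ω']

/-- A POVM on a measurable space `Ω` with values in `B(H)`: effects, normalized, and each
state induces a countably additive Born probability measure. -/
def IsPOVM (E : Set Ω → (H →L[ℂ] H)) : Prop :=
  (∀ X : Set Ω, MeasurableSet X → (E X).IsPositive ∧ (1 - E X).IsPositive) ∧
  E Set.univ = 1 ∧
  ∀ ω : H →L[ℂ] H, IsState ω → ∃ μ : Measure Ω, IsProbabilityMeasure μ ∧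
    ∀ X : Set Ω, MeasurableSet X → (μ X).toReal = (trace (ω ∘L E X)).re

/-- A POVM "on a subset `S`" of `Ω`: normalized on `S` and concentrated there. -/
def IsPOVMOn (S : Set Ω) (E : Set Ω → (H →L[ℂ] H)) : Prop :=
  (∀ X : Set Ω, MeasurableSet X → (E X).IsPositive ∧ (1 - E X).IsPositive) ∧
  E S = 1 ∧ (∀ X : Set Ω, MeasurableSet X → E X = E (X ∩ S)) ∧
  ∀ ω : H →L[ℂ] H, IsState ω → ∃ μ : Measure Ω, IsProbabilityMeasure μ ∧
    ∀ X : Set Ω, MeasurableSet X → (μ X).toReal = (trace (ω ∘L E X)).re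

open Classical in
/-- The Born probability measure `μ^E_ω : X ↦ tr(ω E(X))` of a state `ω` for a POVM `E`. -/
def bornMeasure (E : Set Ω → (H →L[ℂ] H)) (ω : H →L[ℂ] H) : Measure Ω :=
  if h : ∃ μ : Measure Ω, IsProbabilityMeasure μ ∧
      ∀ X : Set Ω, MeasurableSet X → (μ X).toReal = (trace (ω ∘L E X)).re
  then h.choose else 0

variable {HS HR HR' HT HT' : Type*}
  [NormedAddCommGroup HS] [InnerProductSpace ℂ HS] [CompleteSpace HS]
  [NormedAddCommGroup HR] [InnerProductSpace ℂ HR] [CompleteSpace HR]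
  [NormedAddCommGroup HR'] [InnerProductSpace ℂ HR'] [CompleteSpace HR']
  [NormedAddCommGroup HT] [InnerProductSpace ℂ HT] [CompleteSpace HT]
  [NormedAddCommGroup HT'] [InnerProductSpace ℂ HT'] [CompleteSpace HT']

/-- A realization of the Hilbert tensor product of `HS` and `HR` as `HT`: a bilinear map
whose image has dense span and which multiplies inner products. -/
structure HilbertTensor (HS HR HT : Type*)
    [NormedAddCommGroup HS] [InnerProductSpace ℂ HS]
    [NormedAddCommGroup HR] [InnerProductSpace ℂ HR]
    [NormedAddCommGroup HT] [InnerProductSpace ℂ HT] where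
  tmul : HS → HR → HT
  add_left : ∀ a a' b, tmul (a + a') b = tmul a b + tmul a' b
  add_right : ∀ a b b', tmul a (b + b') = tmul a b + tmul a b'
  smul_left : ∀ (c : ℂ) a b, tmul (c • a) b = c • tmul a b
  smul_right : ∀ (c : ℂ) a b, tmul a (c • b) = c • tmul a b
  inner_tmul : ∀ a b c d,
    (inner ℂ (tmul a b) (tmul c d) : ℂ) = (inner ℂ a c : ℂ) * (inner ℂ b d : ℂ)
  dense_span : Dense
    ((Submodule.span ℂ (Set.range fun p : HS × HR => tmul p.1 p.2) : Submodule ℂ HT) : Set HT)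

/-- `C = A ⊗ B` with respect to a tensor-product realization: `C` acts factor-wise on
elementary tensors (this determines `C` uniquely, by density and boundedness). -/
def HilbertTensor.IsTensorOp
    {HS HR HT : Type*}
    [NormedAddCommGroup HS] [InnerProductSpace ℂ HS]
    [NormedAddCommGroup HR] [InnerProductSpace ℂ HR]
    [NormedAddCommGroup HT] [InnerProductSpace ℂ HT]
    (tm : HilbertTensor HS HR HT)
    (A : HS →L[ℂ] HS) (B : HR →L[ℂ] HR) (C : HT →L[ℂ] HT) : Prop :=
  ∀ a b, C (tm.tmul a b) = tm.tmul (A a) (B b)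

/-- `A = ∫_Ω f ⊗ dE`: the defining property of the operator-valued integral, via expectation
values on product states. -/
def IsOVIntegral (tm : HilbertTensor HS HR HT) (f : Ω → HS →L[ℂ] HS)
    (E : Set Ω → (HR →L[ℂ] HR)) (A : HT →L[ℂ] HT) : Prop :=
  ∀ ρ ω ρω, IsState ρ → IsState ω → tm.IsTensorOp ρ ω ρω →
    trace (ρω ∘L A) = ∫ x, trace (ρ ∘L f x) ∂(bornMeasure E ω)

/-- `A = ∫_S f ⊗ dE`: operator-valued integral over a subset `S` of `Ω`. -/
def IsOVIntegralOn (S : Set Ω) (tm : HilbertTensor HS HR HT) (f : Ω → HS →L[ℂ] HS)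
    (E : Set Ω → (HR →L[ℂ] HR)) (A : HT →L[ℂ] HT) : Prop :=
  ∀ ρ ω ρω, IsState ρ → IsState ω → tm.IsTensorOp ρ ω ρω →
    trace (ρω ∘L A) = ∫ x in S, trace (ρ ∘L f x) ∂(bornMeasure E ω)

/-- An ultraweakly continuous and bounded operator-valued function. -/
def UWContinuousBounded [TopologicalSpace Ω] (f : Ω → HS →L[ℂ] HS) : Prop :=
  (∀ ρ : HS →L[ℂ] HS, IsTraceClass ρ → Continuous fun x => trace (ρ ∘L f x)) ∧
  ∃ C : ℝ, ∀ x, ‖f x‖ ≤ C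

/-- Ultraweak continuity/boundedness on a subset. -/
def UWContinuousBoundedOn [TopologicalSpace Ω] (f : Ω → HS →L[ℂ] HS) (S : Set Ω) : Prop :=
  (∀ ρ : HS →L[ℂ] HS, IsTraceClass ρ → ContinuousOn (fun x => trace (ρ ∘L f x)) S) ∧
  ∃ C : ℝ, ∀ x ∈ S, ‖f x‖ ≤ C

variable {G : Type*} [Group G] [TopologicalSpace G]

/-- A strongly continuous unitary representation of a topological group. -/
def IsUnitaryRep (U : G → H →L[ℂ] H) : Prop :=
  U 1 = 1 ∧ (∀ g h : G, U (g * h) = U g ∘L U h) ∧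
  (∀ g : G, adjoint (U g) = U g⁻¹) ∧ ∀ x : H, Continuous fun g : G => U g x

/-- The right action `A.g := U(g)* A U(g)` of `G` on operators. -/
def opAct (U : G → H →L[ℂ] H) (g : G) (A : H →L[ℂ] H) : H →L[ℂ] H :=
  adjoint (U g) ∘L A ∘L U g

/-- The left action `g.ρ := U(g) ρ U(g)*` of `G` on states. -/
def stateAct (U : G → H →L[ℂ] H) (g : G) (ρ : H →L[ℂ] H) : H →L[ℂ] H :=
  U g ∘L ρ ∘L adjoint (U g)

/-- Right covariance of a POVM on a group: `E(X·g) = U(g)* E(X) U(g)`. -/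
def RightCovariant [MeasurableSpace G] (U : G → H →L[ℂ] H) (E : Set G → (H →L[ℂ] H)) : Prop :=
  ∀ X : Set G, MeasurableSet X → ∀ g : G,
    E ((fun x => x * g) '' X) = adjoint (U g) ∘L E X ∘L U g

/-- A channel: a unital, completely positive, normal (ultraweakly continuous, i.e. admitting
a predual on trace-class operators) linear map between operator algebras. -/
structure IsChannel (ψ : (HR →L[ℂ] HR) → (HR' →L[ℂ] HR')) : Prop where
  linear : IsLinearMap ℂ ψ
  unital : ψ 1 = 1
  completelyPositive : ∀ (n : ℕ) (a : Fin n → HR →L[ℂ] HR) (x : Fin n → HR'),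
    0 ≤ (∑ i, ∑ j, (inner ℂ (x i) ((ψ ((adjoint (a i)) ∘L (a j))) (x j)) : ℂ)).re ∧
    (∑ i, ∑ j, (inner ℂ (x i) ((ψ ((adjoint (a i)) ∘L (a j))) (x j)) : ℂ)).im = 0
  normal : ∀ ω : HR' →L[ℂ] HR', IsTraceClass ω → ∃ ω' : HR →L[ℂ] HR, IsTraceClass ω' ∧
    ∀ A : HR →L[ℂ] HR, trace (ω ∘L ψ A) = trace (ω' ∘L A)

/-- The trace norm, via duality: `‖T‖₁ = sup {|tr(T A)| : ‖A‖ ≤ 1}`. -/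
def traceNorm (T : H →L[ℂ] H) : ℝ :=
  ⨆ A : {A : H →L[ℂ] H // ‖A‖ ≤ 1}, ‖trace (T ∘L A.1)‖

end QRF


open QRF

/- ------------------------------------------------------------------ -/
/- Auxiliary lemmas                                                    -/
/- ------------------------------------------------------------------ -/

set_option linter.unusedSectionVars false

local notation "⟪" x ", " y "⟫" => (inner ℂ x y : ℂ)

namespace QRF

section HilbertAux

variable {H : Type*} [NormedAddCommGroup H] [InnerProductSpace ℂ H] [CompleteSpace H]

/-- rank-one projection -/
def projOp (x : H) : H →L[ℂ] H := (innerSL ℂ x).smulRight x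

@[simp] lemma projOp_apply (x y : H) : projOp x y = ⟪x, y⟫ • x := rfl

lemma trace_eq_tsum (T : H →L[ℂ] H) :
    trace T = ∑' i : hbIdx H, ⟪hb H i, T (hb H i)⟫ := rfl

lemma hasSum_diag_proj_comp (z : H) (A : H →L[ℂ] H) :
    HasSum (fun i : hbIdx H => ⟪hb H i, (projOp z ∘L A) (hb H i)⟫) ⟪z, A z⟫ := by
  have h := (hb H).hasSum_inner_mul_inner (ContinuousLinearMap.adjoint A z) z
  rw [ContinuousLinearMap.adjoint_inner_left] at h
  convert h using 2 with i
  · rfl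
  simp only [ContinuousLinearMap.comp_apply, projOp_apply, inner_smul_right,
    ContinuousLinearMap.adjoint_inner_left]

lemma trace_proj_comp (z : H) (A : H →L[ℂ] H) : trace (projOp z ∘L A) = ⟪z, A z⟫ :=
  (hasSum_diag_proj_comp z A).tsum_eq

lemma trace_proj (z : H) : trace (projOp z) = ⟪z, z⟫ := by
  have h := trace_proj_comp z 1
  exact h

lemma isPositive_projOp (x : H) : (projOp x).IsPositive := by
  constructor
  · intro a b
    simp only [ContinuousLinearMap.coe_coe, projOp_apply, inner_smul_left, inner_smul_right,
      inner_conj_symm]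
    ring
  · intro a
    rw [ContinuousLinearMap.reApplyInnerSelf_apply]
    have h : ⟪(projOp x) a, a⟫ = ⟪x, a⟫ * (starRingEnd ℂ) ⟪x, a⟫ := by
      simp [inner_smul_left]
    rw [h, Complex.mul_conj]
    simp [Complex.normSq_nonneg]

lemma isState_projOp {x : H} (hx : ‖x‖ = 1) : IsState (projOp x) := by
  refine ⟨⟨isPositive_projOp x, ?_⟩, ?_⟩
  · have h := (((hb H).hasSum_inner_mul_inner x x).mapL Complex.reCLM).summable
    refine h.congr fun i => ?_
    simp only [Complex.reCLM_apply, projOp_apply, inner_smul_right]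
  · rw [trace_proj, inner_self_eq_norm_sq_to_K, hx]
    norm_num

lemma isPositive_real_smul {T : H →L[ℂ] H} (hT : T.IsPositive) {c : ℝ} (hc : 0 ≤ c) :
    (((c : ℂ)) • T).IsPositive := by
  constructor
  · intro a b
    have hsym := hT.1
    simp only [ContinuousLinearMap.coe_coe, ContinuousLinearMap.smul_apply, inner_smul_left,
      inner_smul_right, Complex.conj_ofReal]
    exact congrArg (fun z => (c : ℂ) * z) (hsym a b)
  · intro x
    rw [ContinuousLinearMap.reApplyInnerSelf_apply]
    have h : ⟪((c : ℂ) • T) x, x⟫ = c • ⟪T x, x⟫ := by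
      rw [ContinuousLinearMap.smul_apply, inner_smul_left, Complex.conj_ofReal,
        Complex.real_smul]
    rw [h, RCLike.smul_re]
    have h2 := hT.2 x
    rw [ContinuousLinearMap.reApplyInnerSelf_apply] at h2
    exact mul_nonneg hc h2

lemma hasSum_diag_state {P : H →L[ℂ] H} (hP : IsState P) :
    HasSum (fun i : hbIdx H => ⟪hb H i, P (hb H i)⟫) 1 := by
  have hreal : (fun i : hbIdx H => ⟪hb H i, P (hb H i)⟫)
      = fun i : hbIdx H => (((⟪hb H i, P (hb H i)⟫).re : ℝ) : ℂ) := by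
    funext i
    have hsym := hP.1.1.1
    have hconj : (starRingEnd ℂ) ⟪hb H i, P (hb H i)⟫ = ⟪hb H i, P (hb H i)⟫ := by
      rw [inner_conj_symm]
      exact hsym (hb H i) (hb H i)
    exact (Complex.conj_eq_iff_re.mp hconj).symm
  have h := (hP.1.2.hasSum).mapL Complex.ofRealCLM
  have h2 : HasSum (fun i : hbIdx H => ⟪hb H i, P (hb H i)⟫)
      (((∑' i : hbIdx H, (⟪hb H i, P (hb H i)⟫).re : ℝ) : ℂ)) := by
    rw [hreal]
    exact h
  have h3 : (((∑' i : hbIdx H, (⟪hb H i, P (hb H i)⟫).re : ℝ) : ℂ)) = 1 := by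
    rw [← h2.tsum_eq]
    exact hP.2
  rwa [h3] at h2

lemma hasSum_diag_add_smul (c d : ℂ) {P Q : H →L[ℂ] H} {p q : ℂ}
    (hp : HasSum (fun i : hbIdx H => ⟪hb H i, P (hb H i)⟫) p)
    (hq : HasSum (fun i : hbIdx H => ⟪hb H i, Q (hb H i)⟫) q) :
    HasSum (fun i : hbIdx H => ⟪hb H i, (c • P + d • Q) (hb H i)⟫) (c * p + d * q) := by
  have h := (hp.mul_left c).add (hq.mul_left d)
  have h2 : (fun i : hbIdx H => ⟪hb H i, (c • P + d • Q) (hb H i)⟫)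
      = fun i : hbIdx H => c * ⟪hb H i, P (hb H i)⟫ + d * ⟪hb H i, Q (hb H i)⟫ := by
    funext i
    simp [inner_add_right, inner_smul_right]
  rw [h2]
  exact h

lemma isState_mix {P Q : H →L[ℂ] H} (hP : IsState P) (hQ : IsState Q) {a b : ℝ}
    (ha : 0 ≤ a) (hb' : 0 ≤ b) (hab : a + b = 1) :
    IsState ((a : ℂ) • P + (b : ℂ) • Q) := by
  have hdiag := hasSum_diag_add_smul (a : ℂ) (b : ℂ) (hasSum_diag_state hP) (hasSum_diag_state hQ)
  refine ⟨⟨(isPositive_real_smul hP.1.1 ha).add (isPositive_real_smul hQ.1.1 hb'), ?_⟩, ?_⟩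
  · refine ((hdiag.mapL Complex.reCLM).summable).congr fun i => ?_
    simp
  · rw [trace_eq_tsum, hdiag.tsum_eq, mul_one, mul_one, ← Complex.ofReal_add, hab,
      Complex.ofReal_one]

lemma hasSum_diag_mix2_comp (c d : ℂ) (x y : H) (A : H →L[ℂ] H) :
    HasSum (fun i : hbIdx H => ⟪hb H i, ((c • projOp x + d • projOp y) ∘L A) (hb H i)⟫)
      (c * ⟪x, A x⟫ + d * ⟪y, A y⟫) := by
  rw [ContinuousLinearMap.add_comp, ContinuousLinearMap.smul_comp,
    ContinuousLinearMap.smul_comp]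
  exact hasSum_diag_add_smul c d (hasSum_diag_proj_comp x A) (hasSum_diag_proj_comp y A)

lemma trace_mix2_proj_comp (c d : ℂ) (x y : H) (A : H →L[ℂ] H) :
    trace ((c • projOp x + d • projOp y) ∘L A) = c * ⟪x, A x⟫ + d * ⟪y, A y⟫ :=
  (hasSum_diag_mix2_comp c d x y A).tsum_eq

lemma trace_mix2_proj_comp' (c d : ℂ) (x y : H) (A : H →L[ℂ] H) :
    trace ((c • projOp x + d • projOp y) ∘L A)
      = c * trace (projOp x ∘L A) + d * trace (projOp y ∘L A) := by
  rw [trace_mix2_proj_comp, trace_proj_comp, trace_proj_comp]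

lemma hasSum_diag_mix4_comp (c₁ c₂ c₃ c₄ : ℂ) (z₁ z₂ z₃ z₄ : H) (A : H →L[ℂ] H) :
    HasSum (fun i : hbIdx H =>
        ⟪hb H i, ((c₁ • projOp z₁ + c₂ • projOp z₂ + c₃ • projOp z₃ + c₄ • projOp z₄) ∘L A)
          (hb H i)⟫)
      (c₁ * ⟪z₁, A z₁⟫ + c₂ * ⟪z₂, A z₂⟫ + c₃ * ⟪z₃, A z₃⟫ + c₄ * ⟪z₄, A z₄⟫) := by
  have h12 := hasSum_diag_mix2_comp c₁ c₂ z₁ z₂ A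
  have h3 := (hasSum_diag_proj_comp z₃ A).mul_left c₃
  have h4 := (hasSum_diag_proj_comp z₄ A).mul_left c₄
  have h := (h12.add h3).add h4
  have h2 : (fun i : hbIdx H =>
      ⟪hb H i, ((c₁ • projOp z₁ + c₂ • projOp z₂ + c₃ • projOp z₃ + c₄ • projOp z₄) ∘L A)
        (hb H i)⟫)
      = fun i : hbIdx H =>
        (⟪hb H i, ((c₁ • projOp z₁ + c₂ • projOp z₂) ∘L A) (hb H i)⟫
          + c₃ * ⟪hb H i, (projOp z₃ ∘L A) (hb H i)⟫)
          + c₄ * ⟪hb H i, (projOp z₄ ∘L A) (hb H i)⟫ := by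
    funext i
    simp [ContinuousLinearMap.add_comp, ContinuousLinearMap.smul_comp, inner_add_right,
      inner_smul_right]
  rw [h2]
  exact h

lemma trace_mix4_proj_comp (c₁ c₂ c₃ c₄ : ℂ) (z₁ z₂ z₃ z₄ : H) (A : H →L[ℂ] H) :
    trace ((c₁ • projOp z₁ + c₂ • projOp z₂ + c₃ • projOp z₃ + c₄ • projOp z₄) ∘L A)
      = c₁ * ⟪z₁, A z₁⟫ + c₂ * ⟪z₂, A z₂⟫ + c₃ * ⟪z₃, A z₃⟫ + c₄ * ⟪z₄, A z₄⟫ :=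
  (hasSum_diag_mix4_comp c₁ c₂ c₃ c₄ z₁ z₂ z₃ z₄ A).tsum_eq

section Unitary

variable {G : Type*} [Group G] [TopologicalSpace G] {U : G → H →L[ℂ] H}

lemma unitary_apply_inv (hU : IsUnitaryRep U) (g : G) (x : H) : U g⁻¹ (U g x) = x := by
  have h := hU.2.1 g⁻¹ g
  rw [inv_mul_cancel, hU.1] at h
  calc U g⁻¹ (U g x) = (U g⁻¹ ∘L U g) x := rfl
    _ = (1 : H →L[ℂ] H) x := by rw [← h]
    _ = x := rfl

lemma unitary_inner (hU : IsUnitaryRep U) (g : G) (x y : H) :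
    ⟪U g x, U g y⟫ = ⟪x, y⟫ := by
  rw [← ContinuousLinearMap.adjoint_inner_right, hU.2.2.1, unitary_apply_inv hU]

lemma unitary_norm (hU : IsUnitaryRep U) (g : G) (x : H) : ‖U g x‖ = ‖x‖ := by
  have h := unitary_inner hU g x x
  rw [inner_self_eq_norm_sq_to_K, inner_self_eq_norm_sq_to_K] at h
  have h2 : ‖U g x‖ ^ 2 = ‖x‖ ^ 2 := by exact_mod_cast h
  calc ‖U g x‖ = Real.sqrt (‖U g x‖ ^ 2) := (Real.sqrt_sq (norm_nonneg _)).symm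
    _ = Real.sqrt (‖x‖ ^ 2) := by rw [h2]
    _ = ‖x‖ := Real.sqrt_sq (norm_nonneg _)

end Unitary

/-- quadratic with enough zeros -/
lemma quadHelp (β τ : ℂ) (s r : ℂ) (hs : s ≠ 0) (hr : r ≠ 0) (hsr : s ≠ r)
    (h1 : (1 - s) * s * β + s ^ 2 * τ = 0) (h2 : (1 - r) * r * β + r ^ 2 * τ = 0) :
    τ = 0 := by
  have e1 : (1 - s) * β + s * τ = 0 := by
    have h : s * ((1 - s) * β + s * τ) = 0 := by linear_combination h1
    rcases mul_eq_zero.mp h with h' | h'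
    · exact absurd h' hs
    · exact h'
  have e2 : (1 - r) * β + r * τ = 0 := by
    have h : r * ((1 - r) * β + r * τ) = 0 := by linear_combination h2
    rcases mul_eq_zero.mp h with h' | h'
    · exact absurd h' hr
    · exact h'
  have e3 : (r - s) * β = 0 := by linear_combination r * e1 - s * e2
  have hβ : β = 0 := by
    rcases mul_eq_zero.mp e3 with h' | h'
    · exact absurd (sub_eq_zero.mp h').symm hsr
    · exact h'
  have e4 : s * τ = 0 := by linear_combination e1 - (1 - s) * hβ
  rcases mul_eq_zero.mp e4 with h' | h'
  · exact absurd h' hs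
  · exact h'

/-- recover AESM of components from two mixtures -/
lemma aesm_recover {α : Type*} [MeasurableSpace α] {m : MeasureTheory.Measure α}
    {F G : α → ℂ} {t₁ t₂ : ℝ} (hne : t₁ ≠ t₂)
    (h1 : AEStronglyMeasurable (fun x => ((1 - t₁ : ℝ) : ℂ) * F x + ((t₁ : ℝ) : ℂ) * G x) m)
    (h2 : AEStronglyMeasurable (fun x => ((1 - t₂ : ℝ) : ℂ) * F x + ((t₂ : ℝ) : ℂ) * G x) m) :
    AEStronglyMeasurable F m ∧ AEStronglyMeasurable G m := by
  have hd : ((t₂ : ℂ) - (t₁ : ℂ)) ≠ 0 := by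
    rw [sub_ne_zero]
    exact_mod_cast fun h => hne (by exact_mod_cast h.symm)
  constructor
  · have hF : F = fun x =>
        ((t₂ : ℂ) / ((t₂ : ℂ) - t₁)) * (((1 - t₁ : ℝ) : ℂ) * F x + ((t₁ : ℝ) : ℂ) * G x)
          + ((-(t₁ : ℂ)) / ((t₂ : ℂ) - t₁)) * (((1 - t₂ : ℝ) : ℂ) * F x + ((t₂ : ℝ) : ℂ) * G x) := by
      funext x
      push_cast
      field_simp
      ring
    rw [hF]
    exact (h1.const_mul _).add (h2.const_mul _)
  · have hG : G = fun x =>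
        ((-(1 - (t₂ : ℂ))) / ((t₂ : ℂ) - t₁)) * (((1 - t₁ : ℝ) : ℂ) * F x + ((t₁ : ℝ) : ℂ) * G x)
          + (((1 - (t₁ : ℂ))) / ((t₂ : ℂ) - t₁)) * (((1 - t₂ : ℝ) : ℂ) * F x + ((t₂ : ℝ) : ℂ) * G x) := by
      funext x
      push_cast
      field_simp
      ring
    rw [hG]
    exact (h1.const_mul _).add (h2.const_mul _)

end HilbertAux

section MeasureAux

variable {H : Type*} [NormedAddCommGroup H] [InnerProductSpace ℂ H] [CompleteSpace H]
variable {Ω : Type*} [MeasurableSpace Ω] {S : Set Ω} {E : Set Ω → (H →L[ℂ] H)}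

lemma born_spec (hE : IsPOVMOn S E) {ω : H →L[ℂ] H} (hω : IsState ω) :
    IsProbabilityMeasure (bornMeasure E ω) ∧
      ∀ X : Set Ω, MeasurableSet X →
        ((bornMeasure E ω) X).toReal = (trace (ω ∘L E X)).re := by
  have h := hE.2.2.2 ω hω
  rw [bornMeasure, dif_pos h]
  exact h.choose_spec

lemma born_null_of_disjoint (hE : IsPOVMOn S E) {ω : H →L[ℂ] H} (hω : IsState ω) :
    ∀ t : Set Ω, MeasurableSet t → t ∩ S = ∅ → bornMeasure E ω t = 0 := by
  obtain ⟨hprob, hspec⟩ := born_spec hE hω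
  haveI := hprob
  intro t ht hdisj
  have h1 := hspec t ht
  rw [hE.2.2.1 t ht, hdisj] at h1
  have h2 := hspec ∅ MeasurableSet.empty
  rw [measure_empty] at h2
  have h3 : (bornMeasure E ω t).toReal = 0 := by
    rw [h1, ← h2]
    simp
  rcases (ENNReal.toReal_eq_zero_iff _).mp h3 with h' | h'
  · exact h'
  · exact absurd h' (measure_ne_top _ _)

lemma born_restrict_self (hE : IsPOVMOn S E) {ω : H →L[ℂ] H} (hω : IsState ω) :
    (bornMeasure E ω).restrict S = bornMeasure E ω := by
  have hnull := born_null_of_disjoint hE hω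
  apply MeasureTheory.Measure.ext
  intro t ht
  rw [MeasureTheory.Measure.restrict_apply ht]
  refine le_antisymm (measure_mono Set.inter_subset_left) ?_
  rw [measure_eq_iInf (t ∩ S)]
  refine le_iInf fun h => le_iInf fun hsub => le_iInf fun hmeas => ?_
  have hdiff : bornMeasure E ω (t \ h) = 0 := by
    apply hnull _ (ht.diff hmeas)
    ext x
    constructor
    · rintro ⟨⟨hxt, hxh⟩, hxS⟩
      exact hxh (hsub ⟨hxt, hxS⟩)
    · intro hx
      exact absurd hx (Set.notMem_empty x)
  calc bornMeasure E ω t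
      ≤ bornMeasure E ω (t ∩ h) + bornMeasure E ω (t \ h) := measure_le_inter_add_diff _ _ _
    _ = bornMeasure E ω (t ∩ h) := by rw [hdiff, add_zero]
    _ ≤ bornMeasure E ω h := measure_mono Set.inter_subset_right

lemma ofReal_mul_re' (a : ℝ) (z : ℂ) : ((a : ℂ) * z).re = a * z.re := by
  simp [Complex.mul_re]

lemma born_mix (hE : IsPOVMOn S E) {x y : H} (hx : ‖x‖ = 1) (hy : ‖y‖ = 1) {a b : ℝ}
    (ha : 0 ≤ a) (hb : 0 ≤ b) (hab : a + b = 1) :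
    bornMeasure E ((a : ℂ) • projOp x + (b : ℂ) • projOp y)
      = ENNReal.ofReal a • bornMeasure E (projOp x)
        + ENNReal.ofReal b • bornMeasure E (projOp y) := by
  obtain ⟨hp0, hs0⟩ := born_spec hE (isState_mix (isState_projOp hx) (isState_projOp hy) ha hb hab)
  obtain ⟨hp1, hs1⟩ := born_spec hE (isState_projOp hx)
  obtain ⟨hp2, hs2⟩ := born_spec hE (isState_projOp hy)
  haveI := hp0; haveI := hp1; haveI := hp2
  apply MeasureTheory.Measure.ext
  intro X hX
  have hfin1 : ENNReal.ofReal a * bornMeasure E (projOp x) X ≠ ⊤ :=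
    ENNReal.mul_ne_top ENNReal.ofReal_ne_top (measure_ne_top _ _)
  have hfin2 : ENNReal.ofReal b * bornMeasure E (projOp y) X ≠ ⊤ :=
    ENNReal.mul_ne_top ENNReal.ofReal_ne_top (measure_ne_top _ _)
  have hRHS : ((ENNReal.ofReal a • bornMeasure E (projOp x)
      + ENNReal.ofReal b • bornMeasure E (projOp y)) X)
      = ENNReal.ofReal a * bornMeasure E (projOp x) X
        + ENNReal.ofReal b * bornMeasure E (projOp y) X := by
    simp [MeasureTheory.Measure.smul_apply, smul_eq_mul]
  apply (ENNReal.toReal_eq_toReal_iff' (measure_ne_top _ _) ?_).mp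
  · rw [hs0 X hX, trace_mix2_proj_comp', hRHS, ENNReal.toReal_add hfin1 hfin2,
      ENNReal.toReal_mul, ENNReal.toReal_mul, ENNReal.toReal_ofReal ha,
      ENNReal.toReal_ofReal hb, hs1 X hX, hs2 X hX, Complex.add_re, ofReal_mul_re',
      ofReal_mul_re']
  · rw [hRHS]
    exact ENNReal.add_ne_top.mpr ⟨hfin1, hfin2⟩

lemma absCont_smul_add_left {α : Type*} [MeasurableSpace α]
    {μ ν : MeasureTheory.Measure α} {a b : ℝ≥0∞} (ha : a ≠ 0) :
    μ ≪ a • μ + b • ν := by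
  refine MeasureTheory.Measure.AbsolutelyContinuous.mk fun s hs h0 => ?_
  rw [MeasureTheory.Measure.add_apply, MeasureTheory.Measure.smul_apply, smul_eq_mul] at h0
  have h1 : a * μ s = 0 := by
    rcases add_eq_zero.mp h0 with ⟨h1, _⟩
    exact h1
  rcases mul_eq_zero.mp h1 with h' | h'
  · exact absurd h' ha
  · exact h'

lemma absCont_smul_add_right {α : Type*} [MeasurableSpace α]
    {μ ν : MeasureTheory.Measure α} {a b : ℝ≥0∞} (hb : b ≠ 0) :
    ν ≪ a • μ + b • ν := by
  refine MeasureTheory.Measure.AbsolutelyContinuous.mk fun s hs h0 => ?_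
  rw [MeasureTheory.Measure.add_apply, MeasureTheory.Measure.smul_apply, smul_eq_mul] at h0
  have h1 : b * ν s = 0 := by
    rcases add_eq_zero.mp h0 with ⟨_, h1⟩
    exact h1
  rcases mul_eq_zero.mp h1 with h' | h'
  · exact absurd h' hb
  · exact h'

end MeasureAux

section TensorAux

variable {HS HR HT : Type*}
  [NormedAddCommGroup HS] [InnerProductSpace ℂ HS] [CompleteSpace HS]
  [NormedAddCommGroup HR] [InnerProductSpace ℂ HR] [CompleteSpace HR]
  [NormedAddCommGroup HT] [InnerProductSpace ℂ HT] [CompleteSpace HT]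

lemma tmul_smul_smul (tm : HilbertTensor HS HR HT) (c d : ℂ) (a : HS) (b : HR) :
    tm.tmul (c • a) (d • b) = (c * d) • tm.tmul a b := by
  rw [tm.smul_left, tm.smul_right, smul_smul]

lemma tmul_zero_left (tm : HilbertTensor HS HR HT) (b : HR) : tm.tmul 0 b = 0 := by
  have h := tm.smul_left 0 0 b
  rw [zero_smul, zero_smul] at h
  exact h

lemma tmul_zero_right (tm : HilbertTensor HS HR HT) (a : HS) : tm.tmul a 0 = 0 := by
  have h := tm.smul_right 0 a 0
  rw [zero_smul, zero_smul] at h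
  exact h

lemma isTensorOp_proj (tm : HilbertTensor HS HR HT) (x : HS) (y : HR) :
    tm.IsTensorOp (projOp x) (projOp y) (projOp (tm.tmul x y)) := by
  intro a b
  rw [projOp_apply, projOp_apply, projOp_apply, tm.inner_tmul, tmul_smul_smul]

lemma isTensorOp_mix (tm : HilbertTensor HS HR HT) (α β γ δ : ℂ) (x x' : HS) (y y' : HR) :
    tm.IsTensorOp (α • projOp x + β • projOp x') (γ • projOp y + δ • projOp y')
      ((α * γ) • projOp (tm.tmul x y) + (α * δ) • projOp (tm.tmul x y')
        + (β * γ) • projOp (tm.tmul x' y) + (β * δ) • projOp (tm.tmul x' y')) := by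
  intro a b
  simp only [ContinuousLinearMap.add_apply, ContinuousLinearMap.smul_apply, projOp_apply,
    tm.inner_tmul, smul_smul]
  rw [tm.add_left, tm.add_right, tm.add_right, tmul_smul_smul, tmul_smul_smul, tmul_smul_smul,
    tmul_smul_smul]
  module

/-- polarization: off-diagonal vanishing from diagonal vanishing on product vectors -/
lemma offdiag_zero (tm : HilbertTensor HS HR HT) (T : HT →L[ℂ] HT)
    (hdiag : ∀ (x : HS) (y : HR), ⟪tm.tmul x y, T (tm.tmul x y)⟫ = 0)
    (x x' : HS) (y y' : HR) : ⟪tm.tmul x y, T (tm.tmul x' y')⟫ = 0 := by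
  have step1 : ∀ (x x' : HS) (y : HR), ⟪tm.tmul x y, T (tm.tmul x' y)⟫ = 0 := by
    intro x x' y
    have e1 : ⟪tm.tmul (x + x') y, T (tm.tmul (x + x') y)⟫
        = ⟪tm.tmul x y, T (tm.tmul x y)⟫ + ⟪tm.tmul x y, T (tm.tmul x' y)⟫
          + ⟪tm.tmul x' y, T (tm.tmul x y)⟫ + ⟪tm.tmul x' y, T (tm.tmul x' y)⟫ := by
      rw [tm.add_left, _root_.map_add, inner_add_left, inner_add_right, inner_add_right]
      ring
    have e2 : ⟪tm.tmul (x + Complex.I • x') y, T (tm.tmul (x + Complex.I • x') y)⟫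
        = ⟪tm.tmul x y, T (tm.tmul x y)⟫ + Complex.I * ⟪tm.tmul x y, T (tm.tmul x' y)⟫
          - Complex.I * ⟪tm.tmul x' y, T (tm.tmul x y)⟫
          + ⟪tm.tmul x' y, T (tm.tmul x' y)⟫ := by
      rw [tm.add_left, tm.smul_left, _root_.map_add, _root_.map_smul, inner_add_left, inner_add_right,
        inner_add_right, inner_smul_left, inner_smul_right, inner_smul_left, inner_smul_right,
        Complex.conj_I]
      ring_nf
      rw [Complex.I_sq]
      ring
    have h1 := hdiag (x + x') y
    rw [e1, hdiag x y, hdiag x' y] at h1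
    have h2 := hdiag (x + Complex.I • x') y
    rw [e2, hdiag x y, hdiag x' y] at h2
    have h3 : (2 * Complex.I) * ⟪tm.tmul x y, T (tm.tmul x' y)⟫ = 0 := by
      linear_combination Complex.I * h1 + h2
    rcases mul_eq_zero.mp h3 with h' | h'
    · exact absurd h' (by simp [Complex.I_ne_zero])
    · exact h'
  have e1 : ⟪tm.tmul x (y + y'), T (tm.tmul x' (y + y'))⟫
      = ⟪tm.tmul x y, T (tm.tmul x' y)⟫ + ⟪tm.tmul x y, T (tm.tmul x' y')⟫
        + ⟪tm.tmul x y', T (tm.tmul x' y)⟫ + ⟪tm.tmul x y', T (tm.tmul x' y')⟫ := by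
    rw [tm.add_right, tm.add_right, _root_.map_add, inner_add_left, inner_add_right, inner_add_right]
    ring
  have e2 : ⟪tm.tmul x (y + Complex.I • y'), T (tm.tmul x' (y + Complex.I • y'))⟫
      = ⟪tm.tmul x y, T (tm.tmul x' y)⟫ + Complex.I * ⟪tm.tmul x y, T (tm.tmul x' y')⟫
        - Complex.I * ⟪tm.tmul x y', T (tm.tmul x' y)⟫
        + ⟪tm.tmul x y', T (tm.tmul x' y')⟫ := by
    rw [tm.add_right, tm.add_right, tm.smul_right, tm.smul_right, _root_.map_add, _root_.map_smul,
      inner_add_left, inner_add_right, inner_add_right, inner_smul_left, inner_smul_right,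
      inner_smul_left, inner_smul_right, Complex.conj_I]
    ring_nf
    rw [Complex.I_sq]
    ring
  have h1 := step1 x x' (y + y')
  rw [e1, step1 x x' y, step1 x x' y'] at h1
  have h2 := step1 x x' (y + Complex.I • y')
  rw [e2, step1 x x' y, step1 x x' y'] at h2
  have h3 : (2 * Complex.I) * ⟪tm.tmul x y, T (tm.tmul x' y')⟫ = 0 := by
    linear_combination Complex.I * h1 + h2
  rcases mul_eq_zero.mp h3 with h' | h'
  · exact absurd h' (by simp [Complex.I_ne_zero])
  · exact h'

lemma tensor_op_eq_zero (tm : HilbertTensor HS HR HT) (T : HT →L[ℂ] HT)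
    (h : ∀ (x x' : HS) (y y' : HR), ⟪tm.tmul x y, T (tm.tmul x' y')⟫ = 0) : T = 0 := by
  set s : Set HT := Set.range fun p : HS × HR => tm.tmul p.1 p.2 with hs
  have hinner : ∀ z ∈ Submodule.span ℂ s, ∀ w ∈ Submodule.span ℂ s, ⟪w, T z⟫ = 0 := by
    intro z hz
    refine Submodule.span_induction (p := fun z _ => ∀ w ∈ Submodule.span ℂ s, ⟪w, T z⟫ = 0)
      ?_ ?_ ?_ ?_ hz
    · rintro _ ⟨⟨a, b⟩, rfl⟩ w hw
      refine Submodule.span_induction (p := fun w _ => ⟪w, T (tm.tmul a b)⟫ = 0)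
        ?_ ?_ ?_ ?_ hw
      · rintro _ ⟨⟨c, d⟩, rfl⟩
        exact h c a d b
      · simp
      · intro u u' _ _ hu hu'
        rw [inner_add_left, hu, hu', add_zero]
      · intro c u _ hu
        rw [inner_smul_left, hu, mul_zero]
    · intro w hw
      simp
    · intro u u' _ _ hu hu' w hw
      rw [_root_.map_add, inner_add_right, hu w hw, hu' w hw, add_zero]
    · intro c u _ hu w hw
      rw [_root_.map_smul, inner_smul_right, hu w hw, mul_zero]
  have hzero : ∀ z ∈ Submodule.span ℂ s, T z = 0 := by
    intro z hz
    have hcont : Continuous fun w : HT => ⟪w, T z⟫ := by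
      exact Continuous.inner continuous_id continuous_const
    have hEqOn : Set.EqOn (fun w : HT => ⟪w, T z⟫) (fun _ => (0 : ℂ))
        ((Submodule.span ℂ s : Submodule ℂ HT) : Set HT) := fun w hw => hinner z hz w hw
    have hall := Continuous.ext_on tm.dense_span hcont continuous_const hEqOn
    have hTz : ⟪T z, T z⟫ = 0 := congrFun hall (T z)
    exact inner_self_eq_zero.mp hTz
  have hfinal : ∀ z : HT, T z = 0 := by
    have hcont : Continuous fun z : HT => T z := T.continuous
    have hall := Continuous.ext_on tm.dense_span hcont continuous_const
      (fun z hz => hzero z hz)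
    exact fun z => congrFun hall z
  ext z
  simp [hfinal z]

end TensorAux

end QRF

/-- Invariance of the relativized quantum field: `¥(φ̂) = ∫_(π⁻¹ U) φ̂(π b).h_σ(b) ⊗ dE(b)`
is invariant under the diagonal unitary action of the structure group `H`. -/
theorem statement14 {K B M HS HR HT : Type*}
    [Group K] [TopologicalSpace K] [IsTopologicalGroup K]
    [TopologicalSpace B] [MeasurableSpace B] [BorelSpace B] [TopologicalSpace M]
    [NormedAddCommGroup HS] [InnerProductSpace ℂ HS] [CompleteSpace HS]
    [NormedAddCommGroup HR] [InnerProductSpace ℂ HR] [CompleteSpace HR]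
    [NormedAddCommGroup HT] [InnerProductSpace ℂ HT] [CompleteSpace HT]
    (act : B → K → B)
    (hact1 : ∀ b, act b 1 = b)
    (hactm : ∀ b g g', act (act b g) g' = act b (g * g'))
    (hactc : Continuous fun p : B × K => act p.1 p.2)
    (π : B → M) (hπc : Continuous π) (hπs : Function.Surjective π)
    (hfib : ∀ b g, π (act b g) = π b)
    (hft : ∀ b b', π b = π b' → ∃! g, act b g = b')
    (U : Set M) (σ : M → B) (hσc : ContinuousOn σ U) (hσs : ∀ p ∈ U, π (σ p) = p)
    (hsig : B → K) (hsigdef : ∀ b, π b ∈ U → act (σ (π b)) (hsig b) = b)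
    (US : K → HS →L[ℂ] HS) (hUS : IsUnitaryRep US)
    (UR : K → HR →L[ℂ] HR) (hUR : IsUnitaryRep UR)
    (E : Set B → (HR →L[ℂ] HR)) (hE : IsPOVMOn (π ⁻¹' U) E)
    (hcov : ∀ X : Set B, MeasurableSet X → ∀ g : K,
      E ((fun b => act b g) '' X) = adjoint (UR g) ∘L E X ∘L UR g)
    (φf : M → HS →L[ℂ] HS)
    (hf : UWContinuousBoundedOn (fun b => opAct US (hsig b) (φf (π b))) (π ⁻¹' U))
    (tm : HilbertTensor HS HR HT)
    (Y : HT →L[ℂ] HT)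
    (hY : IsOVIntegralOn (π ⁻¹' U) tm (fun b => opAct US (hsig b) (φf (π b))) E Y)
    (g : K) (W : HT →L[ℂ] HT) (hW : tm.IsTensorOp (US g) (UR g) W) :
    adjoint W ∘L Y ∘L W = Y := by
  classical
  -- the homeomorphism `b ↦ b · g⁻¹`
  have hcontk : ∀ k : K, Continuous fun b : B => act b k := fun k =>
    hactc.comp (continuous_id.prodMk continuous_const)
  let eH : B ≃ₜ B :=
    { toFun := fun b => act b g⁻¹
      invFun := fun b => act b g
      left_inv := fun b => by
        show act (act b g⁻¹) g = b
        rw [hactm, inv_mul_cancel, hact1]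
      right_inv := fun b => by
        show act (act b g) g⁻¹ = b
        rw [hactm, mul_inv_cancel, hact1]
      continuous_toFun := hcontk g⁻¹
      continuous_invFun := hcontk g }
  let em : B ≃ᵐ B := eH.toMeasurableEquiv
  -- main quantitative step, for unit vectors
  have key : ∀ (u : HS) (v : HR), ‖u‖ = 1 → ‖v‖ = 1 →
      ⟪tm.tmul (US g u) (UR g v), Y (tm.tmul (US g u) (UR g v))⟫
        = ⟪tm.tmul u v, Y (tm.tmul u v)⟫ := by
    intro u v hu hv
    have hu' : ‖US g u‖ = 1 := by rw [unitary_norm hUS g u]; exact hu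
    have hv' : ‖UR g v‖ = 1 := by rw [unitary_norm hUR g v]; exact hv
    obtain ⟨hprob0, hspec0⟩ := born_spec hE (isState_projOp hv)
    obtain ⟨hprob1, hspec1⟩ := born_spec hE (isState_projOp hv')
    haveI := hprob0
    haveI := hprob1
    -- notation
    set f : B → HS →L[ℂ] HS := fun b => opAct US (hsig b) (φf (π b)) with hfdef
    set F : B → ℂ := fun x => trace (projOp u ∘L f x) with hFdef
    set G : B → ℂ := fun x => trace (projOp (US g u) ∘L f x) with hGdef
    set μ0 : Measure B := bornMeasure E (projOp v) with hμ0def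
    set μ1 : Measure B := bornMeasure E (projOp (UR g v)) with hμ1def
    -- the pushforward identity
    have hmapμ : μ1 = Measure.map em μ0 := by
      haveI : IsProbabilityMeasure (Measure.map em μ0) :=
        Measure.isProbabilityMeasure_map em.measurable.aemeasurable
      apply MeasureTheory.Measure.ext
      intro X hX
      have hXm : MeasurableSet (em ⁻¹' X) := em.measurable hX
      have himg : (fun b => act b g) '' X = em ⁻¹' X := by
        ext c
        constructor
        · rintro ⟨b, hb, rfl⟩
          show act (act b g) g⁻¹ ∈ X
          rw [hactm, mul_inv_cancel, hact1]
          exact hb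
        · intro hc
          refine ⟨act c g⁻¹, hc, ?_⟩
          show act (act c g⁻¹) g = c
          rw [hactm, inv_mul_cancel, hact1]
      apply (ENNReal.toReal_eq_toReal_iff' (measure_ne_top _ _) (measure_ne_top _ _)).mp
      rw [Measure.map_apply em.measurable hX, hμ1def, hμ0def, hspec1 X hX, hspec0 _ hXm,
        ← himg, hcov X hX g, trace_proj_comp, trace_proj_comp]
      congr 1
      rw [ContinuousLinearMap.comp_apply, ContinuousLinearMap.comp_apply,
        ContinuousLinearMap.adjoint_inner_right]
    -- the integrand identity on `S = π ⁻¹' U`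
    have hFG : ∀ x ∈ π ⁻¹' U, G (em x) = F x := by
      intro x hx
      have hemx : em x = act x g⁻¹ := rfl
      have hπe : π (act x g⁻¹) = π x := hfib x g⁻¹
      have hxU : π x ∈ U := hx
      have h1 : act (σ (π x)) (hsig x) = x := hsigdef x hxU
      have h2 : act (σ (π x)) (hsig (act x g⁻¹)) = act x g⁻¹ := by
        have h := hsigdef (act x g⁻¹) (by rw [hπe]; exact hxU)
        rwa [hπe] at h
      have h3 : act (σ (π x)) (hsig x * g⁻¹) = act x g⁻¹ := by
        rw [← hactm, h1]
      have hfteq : hsig (act x g⁻¹) = hsig x * g⁻¹ := by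
        have hft' := hft (σ (π x)) (act x g⁻¹) (by rw [hσs _ hxU, hπe])
        exact hft'.unique h2 h3
      have harg : US (hsig x * g⁻¹) (US g u) = US (hsig x) u := by
        rw [hUS.2.1, ContinuousLinearMap.comp_apply, unitary_apply_inv hUS g u]
      show trace (projOp (US g u) ∘L f (em x)) = F x
      rw [hemx, hfdef]
      show trace (projOp (US g u) ∘L opAct US (hsig (act x g⁻¹)) (φf (π (act x g⁻¹)))) = F x
      rw [hπe, hfteq, hFdef]
      show trace (projOp (US g u) ∘L opAct US (hsig x * g⁻¹) (φf (π x)))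
        = trace (projOp u ∘L opAct US (hsig x) (φf (π x)))
      rw [trace_proj_comp, trace_proj_comp, opAct, opAct,
        ContinuousLinearMap.comp_apply, ContinuousLinearMap.comp_apply,
        ContinuousLinearMap.adjoint_inner_right,
        ContinuousLinearMap.comp_apply, ContinuousLinearMap.comp_apply,
        ContinuousLinearMap.adjoint_inner_right, harg]
    -- restriction to S is trivial
    have hres : ∀ (ω : HR →L[ℂ] HR), IsState ω →
        (bornMeasure E ω).restrict (π ⁻¹' U) = bornMeasure E ω :=
      fun ω hω => born_restrict_self hE hω
    -- the two basic instances of hY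
    have hY00 : ⟪tm.tmul u v, Y (tm.tmul u v)⟫ = ∫ x, F x ∂μ0 := by
      have h := hY (projOp u) (projOp v) (projOp (tm.tmul u v)) (isState_projOp hu)
        (isState_projOp hv) (isTensorOp_proj tm u v)
      rw [trace_proj_comp] at h
      rw [h]
      rw [show (∫ x in π ⁻¹' U, trace (projOp u ∘L opAct US (hsig x) (φf (π x)))
          ∂bornMeasure E (projOp v))
        = ∫ x, F x ∂(bornMeasure E (projOp v)).restrict (π ⁻¹' U) from rfl]
      rw [hres _ (isState_projOp hv)]
    have hY11 : ⟪tm.tmul (US g u) (UR g v), Y (tm.tmul (US g u) (UR g v))⟫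
        = ∫ x, G x ∂μ1 := by
      have h := hY (projOp (US g u)) (projOp (UR g v)) (projOp (tm.tmul (US g u) (UR g v)))
        (isState_projOp hu') (isState_projOp hv') (isTensorOp_proj tm (US g u) (UR g v))
      rw [trace_proj_comp] at h
      rw [h]
      rw [show (∫ x in π ⁻¹' U, trace (projOp (US g u) ∘L opAct US (hsig x) (φf (π x)))
          ∂bornMeasure E (projOp (UR g v)))
        = ∫ x, G x ∂(bornMeasure E (projOp (UR g v))).restrict (π ⁻¹' U) from rfl]
      rw [hres _ (isState_projOp hv')]
    by_cases hAB : AEStronglyMeasurable F μ0 ∧ AEStronglyMeasurable G μ1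
    · -- the genuine change of variables
      obtain ⟨hA, hB⟩ := hAB
      rw [hY00, hY11, hmapμ, MeasureTheory.integral_map_equiv]
      apply integral_congr_ae
      have hgem : AEStronglyMeasurable (fun x => G (em x)) μ0 := by
        rw [hmapμ] at hB
        have h := (em.measurableEmbedding.aestronglyMeasurable_map_iff).mp hB
        exact h
      have h1 : μ0 {x | ¬ G (em x) = hgem.mk _ x} = 0 := ae_iff.mp hgem.ae_eq_mk
      have h2 : μ0 {x | ¬ F x = hA.mk F x} = 0 := ae_iff.mp hA.ae_eq_mk
      obtain ⟨N₁, hsub₁, hm₁, h0₁⟩ := exists_measurable_superset_of_null h1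
      obtain ⟨N₂, hsub₂, hm₂, h0₂⟩ := exists_measurable_superset_of_null h2
      have hDm : MeasurableSet {x | ¬ hgem.mk _ x = hA.mk F x} := by
        have := (measurableSet_eq_fun hgem.stronglyMeasurable_mk.measurable
          hA.stronglyMeasurable_mk.measurable)
        exact this.compl
      have hnull := born_null_of_disjoint hE (isState_projOp hv)
      have hkey : μ0 ({x | ¬ hgem.mk _ x = hA.mk F x} \ (N₁ ∪ N₂)) = 0 := by
        apply hnull _ (hDm.diff (hm₁.union hm₂))
        ext x
        simp only [Set.mem_inter_iff, Set.mem_diff, Set.mem_setOf_eq, Set.mem_union,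
          Set.mem_empty_iff_false, iff_false, not_and, and_imp]
        intro hne hnN hxS
        apply hne
        have hx1 : G (em x) = hgem.mk _ x := by
          by_contra hc
          exact hnN (Or.inl (hsub₁ hc))
        have hx2 : F x = hA.mk F x := by
          by_contra hc
          exact hnN (Or.inr (hsub₂ hc))
        rw [← hx1, ← hx2]
        exact hFG x hxS
      have hDnull : μ0 {x | ¬ hgem.mk _ x = hA.mk F x} = 0 := by
        have hsub : {x | ¬ hgem.mk _ x = hA.mk F x}
            ⊆ ({x | ¬ hgem.mk _ x = hA.mk F x} \ (N₁ ∪ N₂)) ∪ (N₁ ∪ N₂) := by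
          intro x hx
          by_cases hN : x ∈ N₁ ∪ N₂
          · exact Or.inr hN
          · exact Or.inl ⟨hx, hN⟩
        refine le_antisymm ?_ (by positivity)
        calc μ0 {x | ¬ hgem.mk _ x = hA.mk F x}
            ≤ μ0 (({x | ¬ hgem.mk _ x = hA.mk F x} \ (N₁ ∪ N₂)) ∪ (N₁ ∪ N₂)) :=
              measure_mono hsub
          _ ≤ μ0 ({x | ¬ hgem.mk _ x = hA.mk F x} \ (N₁ ∪ N₂)) + μ0 (N₁ ∪ N₂) :=
              measure_union_le _ _
          _ ≤ 0 + (μ0 N₁ + μ0 N₂) :=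
              add_le_add (le_of_eq hkey) (measure_union_le _ _)
          _ = 0 := by rw [h0₁, h0₂]; simp
      have hae : (fun x => hgem.mk _ x) =ᵐ[μ0] fun x => hA.mk F x := ae_iff.mpr hDnull
      exact hgem.ae_eq_mk.trans (hae.trans hA.ae_eq_mk.symm)
    · -- the degenerate case: everything vanishes
      set Good : ℝ → Prop := fun t =>
        AEStronglyMeasurable (fun x => ((1 - t : ℝ) : ℂ) * F x + ((t : ℝ) : ℂ) * G x)
          (bornMeasure E (((1 - t : ℝ) : ℂ) • projOp v + ((t : ℝ) : ℂ) • projOp (UR g v)))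
        with hGoodDef
      -- bad t gives a vanishing quadratic value
      have hQzero : ∀ t : ℝ, 0 ≤ t → t ≤ 1 → ¬ Good t →
          ((1 - t : ℝ) : ℂ) * ((1 - t : ℝ) : ℂ) * ⟪tm.tmul u v, Y (tm.tmul u v)⟫
            + ((1 - t : ℝ) : ℂ) * ((t : ℝ) : ℂ) * ⟪tm.tmul u (UR g v), Y (tm.tmul u (UR g v))⟫
            + ((t : ℝ) : ℂ) * ((1 - t : ℝ) : ℂ) * ⟪tm.tmul (US g u) v, Y (tm.tmul (US g u) v)⟫
            + ((t : ℝ) : ℂ) * ((t : ℝ) : ℂ)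
              * ⟪tm.tmul (US g u) (UR g v), Y (tm.tmul (US g u) (UR g v))⟫ = 0 := by
        intro t ht0 ht1 hbad
        have hsρ : IsState (((1 - t : ℝ) : ℂ) • projOp u + ((t : ℝ) : ℂ) • projOp (US g u)) :=
          isState_mix (isState_projOp hu) (isState_projOp hu') (by linarith) ht0 (by ring)
        have hsω : IsState (((1 - t : ℝ) : ℂ) • projOp v + ((t : ℝ) : ℂ) • projOp (UR g v)) :=
          isState_mix (isState_projOp hv) (isState_projOp hv') (by linarith) ht0 (by ring)
        have h := hY _ _ _ hsρ hsω
          (isTensorOp_mix tm ((1 - t : ℝ) : ℂ) ((t : ℝ) : ℂ) ((1 - t : ℝ) : ℂ) ((t : ℝ) : ℂ)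
            u (US g u) v (UR g v))
        rw [trace_mix4_proj_comp] at h
        rw [h]
        have hintegrand : (fun x => trace
            (((((1 - t : ℝ) : ℂ) • projOp u + ((t : ℝ) : ℂ) • projOp (US g u)))
              ∘L opAct US (hsig x) (φf (π x))))
            = fun x => ((1 - t : ℝ) : ℂ) * F x + ((t : ℝ) : ℂ) * G x := by
          funext x
          rw [trace_mix2_proj_comp']
        rw [show (∫ x in π ⁻¹' U, trace
            (((((1 - t : ℝ) : ℂ) • projOp u + ((t : ℝ) : ℂ) • projOp (US g u)))
              ∘L opAct US (hsig x) (φf (π x)))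
            ∂bornMeasure E (((1 - t : ℝ) : ℂ) • projOp v + ((t : ℝ) : ℂ) • projOp (UR g v)))
          = ∫ x, trace
            (((((1 - t : ℝ) : ℂ) • projOp u + ((t : ℝ) : ℂ) • projOp (US g u)))
              ∘L opAct US (hsig x) (φf (π x)))
            ∂(bornMeasure E (((1 - t : ℝ) : ℂ) • projOp v
              + ((t : ℝ) : ℂ) • projOp (UR g v))).restrict (π ⁻¹' U) from rfl]
        rw [hres _ hsω]
        rw [hintegrand]
        simp only [hGoodDef] at hbad
        exact integral_undef fun hint => hbad hint.aestronglyMeasurable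
      -- at most one good point in the open interval
      have hbadpair : ∀ t₁ t₂ : ℝ, 0 < t₁ → t₁ < 1 → 0 < t₂ → t₂ < 1 → t₁ ≠ t₂ →
          Good t₁ → Good t₂ → False := by
        intro t₁ t₂ h₁0 h₁1 h₂0 h₂1 hne hg₁ hg₂
        have hmix : ∀ t : ℝ, 0 < t → t < 1 → Good t →
            AEStronglyMeasurable (fun x => ((1 - t : ℝ) : ℂ) * F x + ((t : ℝ) : ℂ) * G x) μ0
            ∧ AEStronglyMeasurable
                (fun x => ((1 - t : ℝ) : ℂ) * F x + ((t : ℝ) : ℂ) * G x) μ1 := by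
          intro t ht0 ht1 hg
          simp only [hGoodDef] at hg
          have hmeq := born_mix hE hv hv' (a := 1 - t) (b := t) (by linarith) (le_of_lt ht0)
            (by ring)
          rw [hmeq] at hg
          constructor
          · exact hg.mono_ac (by
              exact absCont_smul_add_left (by simp [ENNReal.ofReal_eq_zero]; linarith))
          · exact hg.mono_ac (by
              exact absCont_smul_add_right (by simp [ENNReal.ofReal_eq_zero]; linarith))
        obtain ⟨hm₁0, hm₁1⟩ := hmix t₁ h₁0 h₁1 hg₁
        obtain ⟨hm₂0, hm₂1⟩ := hmix t₂ h₂0 h₂1 hg₂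
        have hr0 := aesm_recover hne hm₁0 hm₂0
        have hr1 := aesm_recover hne hm₁1 hm₂1
        exact hAB ⟨hr0.1, hr1.2⟩
      -- choose two bad interior points
      obtain ⟨s, r, hs0, hs1, hr0, hr1, hsr, hbs, hbr⟩ :
          ∃ s r : ℝ, 0 < s ∧ s < 1 ∧ 0 < r ∧ r < 1 ∧ s ≠ r ∧ ¬ Good s ∧ ¬ Good r := by
        by_cases hg1 : Good (1/4)
        · refine ⟨1/2, 3/4, by norm_num, by norm_num, by norm_num, by norm_num, by norm_num,
            ?_, ?_⟩
          · intro hg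
            exact hbadpair (1/4) (1/2) (by norm_num) (by norm_num) (by norm_num) (by norm_num)
              (by norm_num) hg1 hg
          · intro hg
            exact hbadpair (1/4) (3/4) (by norm_num) (by norm_num) (by norm_num) (by norm_num)
              (by norm_num) hg1 hg
        · by_cases hg2 : Good (1/2)
          · refine ⟨1/4, 3/4, by norm_num, by norm_num, by norm_num, by norm_num, by norm_num,
              hg1, ?_⟩
            intro hg
            exact hbadpair (1/2) (3/4) (by norm_num) (by norm_num) (by norm_num) (by norm_num)
              (by norm_num) hg2 hg
          · exact ⟨1/4, 1/2, by norm_num, by norm_num, by norm_num, by norm_num, by norm_num,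
              hg1, hg2⟩
      have hQs := hQzero s (le_of_lt hs0) (le_of_lt hs1) hbs
      have hQr := hQzero r (le_of_lt hr0) (le_of_lt hr1) hbr
      -- cast facts
      have hsC : ((s : ℝ) : ℂ) ≠ 0 := by exact_mod_cast ne_of_gt hs0
      have hrC : ((r : ℝ) : ℂ) ≠ 0 := by exact_mod_cast ne_of_gt hr0
      have hsrC : ((s : ℝ) : ℂ) ≠ ((r : ℝ) : ℂ) := by exact_mod_cast hsr
      have hs1C : (1 : ℂ) - (s : ℂ) ≠ 0 := by
        intro h
        have : (s : ℂ) = 1 := by linear_combination -h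
        have : s = 1 := by exact_mod_cast this
        linarith
      have hr1C : (1 : ℂ) - (r : ℂ) ≠ 0 := by
        intro h
        have : (r : ℂ) = 1 := by linear_combination -h
        have : r = 1 := by exact_mod_cast this
        linarith
      have hs1rC : (1 : ℂ) - (s : ℂ) ≠ (1 : ℂ) - (r : ℂ) := by
        intro h
        exact hsrC (by linear_combination -h)
      -- push casts in the quadratic identities
      have hQs' : (1 - (s : ℂ)) * (1 - (s : ℂ)) * ⟪tm.tmul u v, Y (tm.tmul u v)⟫
          + (1 - (s : ℂ)) * (s : ℂ) * ⟪tm.tmul u (UR g v), Y (tm.tmul u (UR g v))⟫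
          + (s : ℂ) * (1 - (s : ℂ)) * ⟪tm.tmul (US g u) v, Y (tm.tmul (US g u) v)⟫
          + (s : ℂ) * (s : ℂ) * ⟪tm.tmul (US g u) (UR g v), Y (tm.tmul (US g u) (UR g v))⟫
          = 0 := by
        have h := hQs
        push_cast at h
        linear_combination h
      have hQr' : (1 - (r : ℂ)) * (1 - (r : ℂ)) * ⟪tm.tmul u v, Y (tm.tmul u v)⟫
          + (1 - (r : ℂ)) * (r : ℂ) * ⟪tm.tmul u (UR g v), Y (tm.tmul u (UR g v))⟫
          + (r : ℂ) * (1 - (r : ℂ)) * ⟪tm.tmul (US g u) v, Y (tm.tmul (US g u) v)⟫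
          + (r : ℂ) * (r : ℂ) * ⟪tm.tmul (US g u) (UR g v), Y (tm.tmul (US g u) (UR g v))⟫
          = 0 := by
        have h := hQr
        push_cast at h
        linear_combination h
      rcases not_and_or.mp hAB with hA | hB
      · -- τ00 = 0 directly, then τ11 = 0 by the quadratic argument
        have hz0 : (∫ x, F x ∂μ0) = 0 :=
          integral_undef fun hint => hA hint.aestronglyMeasurable
        have h00 : ⟪tm.tmul u v, Y (tm.tmul u v)⟫ = 0 := hY00.trans hz0
        have h11 : ⟪tm.tmul (US g u) (UR g v), Y (tm.tmul (US g u) (UR g v))⟫ = 0 := by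
          apply quadHelp
            (⟪tm.tmul u (UR g v), Y (tm.tmul u (UR g v))⟫
              + ⟪tm.tmul (US g u) v, Y (tm.tmul (US g u) v)⟫)
            _ (s : ℂ) (r : ℂ) hsC hrC hsrC
          · linear_combination hQs' - (1 - (s:ℂ)) * (1 - (s:ℂ)) * h00
          · linear_combination hQr' - (1 - (r:ℂ)) * (1 - (r:ℂ)) * h00
        rw [h00, h11]
      · -- τ11 = 0 directly, then τ00 = 0 by the quadratic argument
        have hz1 : (∫ x, G x ∂μ1) = 0 :=
          integral_undef fun hint => hB hint.aestronglyMeasurable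
        have h11 : ⟪tm.tmul (US g u) (UR g v), Y (tm.tmul (US g u) (UR g v))⟫ = 0 :=
          hY11.trans hz1
        have h00 : ⟪tm.tmul u v, Y (tm.tmul u v)⟫ = 0 := by
          apply quadHelp
            (⟪tm.tmul u (UR g v), Y (tm.tmul u (UR g v))⟫
              + ⟪tm.tmul (US g u) v, Y (tm.tmul (US g u) v)⟫)
            _ (1 - (s : ℂ)) (1 - (r : ℂ)) hs1C hr1C hs1rC
          · linear_combination hQs' - (s:ℂ) * (s:ℂ) * h11
          · linear_combination hQr' - (r:ℂ) * (r:ℂ) * h11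
        rw [h00, h11]
  -- extend to all vectors
  have key' : ∀ (u : HS) (v : HR),
      ⟪W (tm.tmul u v), Y (W (tm.tmul u v))⟫ = ⟪tm.tmul u v, Y (tm.tmul u v)⟫ := by
    intro u v
    rw [hW u v]
    by_cases hu : u = 0
    · subst hu
      simp only [_root_.map_zero, tmul_zero_left, inner_zero_left]
    by_cases hv : v = 0
    · subst hv
      simp only [_root_.map_zero, tmul_zero_right, inner_zero_left]
    · have hnu : ((‖u‖ : ℝ) : ℂ) ≠ 0 := by
        simp only [ne_eq, Complex.ofReal_eq_zero, norm_eq_zero]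
        exact hu
      have hnv : ((‖v‖ : ℝ) : ℂ) ≠ 0 := by
        simp only [ne_eq, Complex.ofReal_eq_zero, norm_eq_zero]
        exact hv
      set u₀ : HS := (((‖u‖ : ℝ) : ℂ))⁻¹ • u with hu₀
      set v₀ : HR := (((‖v‖ : ℝ) : ℂ))⁻¹ • v with hv₀
      have hun : ‖u₀‖ = 1 := by
        rw [hu₀, norm_smul, norm_inv, Complex.norm_real, norm_norm]
        exact inv_mul_cancel₀ (norm_ne_zero_iff.mpr hu)
      have hvn : ‖v₀‖ = 1 := by
        rw [hv₀, norm_smul, norm_inv, Complex.norm_real, norm_norm]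
        exact inv_mul_cancel₀ (norm_ne_zero_iff.mpr hv)
      have hueq : u = ((‖u‖ : ℝ) : ℂ) • u₀ := (smul_inv_smul₀ hnu u).symm
      have hveq : v = ((‖v‖ : ℝ) : ℂ) • v₀ := (smul_inv_smul₀ hnv v).symm
      have hk := key u₀ v₀ hun hvn
      rw [hueq, hveq]
      simp only [_root_.map_smul, tmul_smul_smul, inner_smul_left, inner_smul_right]
      rw [hk]
  -- assemble: the difference operator annihilates products, hence vanishes
  have hdiagT : ∀ (x : HS) (y : HR),
      ⟪tm.tmul x y, (adjoint W ∘L Y ∘L W - Y) (tm.tmul x y)⟫ = 0 := by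
    intro x y
    rw [ContinuousLinearMap.sub_apply, inner_sub_right, ContinuousLinearMap.comp_apply,
      ContinuousLinearMap.comp_apply, ContinuousLinearMap.adjoint_inner_right, key' x y]
    exact sub_self _
  have hT0 : adjoint W ∘L Y ∘L W - Y = 0 :=
    tensor_op_eq_zero tm _ (fun x x' y y' => offdiag_zero tm _ hdiagT x x' y y')
  exact sub_eq_zero.mp hT0
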